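/- Let ω ∈ ℝ, let 0 < τ₂ < τ, let f, f₂ : ℝ → ℝ, and let θ₀ ∈ ℝ. Suppose θ : ℝ → ℝ satisfies: (i) θ(0) = θ₀; (ii) θ has derivative ω at every t not of the form nτ or nτ + τ₂ (n ∈ ℕ); (iii) θ is continuous from the right at each time nτ and nτ + τ₂; (iv) for every n ≥ 1, if L is the left limit of θ at nτ then θ(nτ) = L + f(L); (v) for every n ∈ ℕ, if L₂ is the left limit of θ at nτ + τ₂ then θ(nτ + τ₂) = L₂ + f₂(L₂). Then for every n ∈ ℕ, θ(nτ) = G^[n](θ₀), where G = h₁ ∘ h₂ with h₂(s) = s + ωτ₂ + f₂(s + ωτ₂) and h₁(s) = s + ω(τ − τ₂) + f(s + ω(τ − τ₂)). -/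

import Mathlib

open Filter Topology Set

/-!
Between two consecutive pulses θ has constant derivative ω and is right-continuous at the
earlier pulse, so by the mean value theorem it is affine there; its left limit at the next
pulse is therefore the value after the previous pulse advanced by ω times the gap. The pulse
rule turns this into `θ(nτ + τ₂) = h₂ (θ(nτ))` and `θ((n+1)τ) = h₁ (θ(nτ + τ₂))`, and
induction on `n` gives the iterates of `h₁ ∘ h₂`.
-/

lemma eq_add_mul_sub_of_hasDerivAt_Ioo {θ : ℝ → ℝ} {ω a b : ℝ}
    (hc : ContinuousWithinAt θ (Ici a) a) (hd : ∀ x ∈ Ioo a b, HasDerivAt θ ω x) :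
    ∀ t ∈ Ico a b, θ t = θ a + ω * (t - a) := by
  rintro t ⟨hat, htb⟩
  rcases hat.eq_or_lt with rfl | hat
  · simp
  have hcont : ContinuousOn θ (Icc a t) := by
    rintro x ⟨hax, hxt⟩
    rcases hax.eq_or_lt with rfl | hax
    · exact hc.mono Icc_subset_Ici_self
    · exact (hd x ⟨hax, hxt.trans_lt htb⟩).continuousAt.continuousWithinAt
  obtain ⟨c, -, hslope⟩ := exists_hasDerivAt_eq_slope θ (fun _ ↦ ω) hat hcont
    fun x hx ↦ hd x ⟨hx.1, hx.2.trans htb⟩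
  rw [hslope, div_mul_cancel₀ _ (sub_ne_zero.mpr hat.ne')]
  ring

lemma tendsto_nhdsLT_of_hasDerivAt_Ioo {θ : ℝ → ℝ} {ω a b : ℝ} (hab : a < b)
    (hc : ContinuousWithinAt θ (Ici a) a) (hd : ∀ x ∈ Ioo a b, HasDerivAt θ ω x) :
    Tendsto θ (𝓝[<] b) (𝓝 (θ a + ω * (b - a))) := by
  have haffine : Tendsto (fun t ↦ θ a + ω * (t - a)) (𝓝[<] b) (𝓝 (θ a + ω * (b - a))) :=
    (Continuous.tendsto (by fun_prop) b).mono_left nhdsWithin_le_nhds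
  refine haffine.congr' ?_
  filter_upwards [Ioo_mem_nhdsLT hab] with t ht
  exact (eq_add_mul_sub_of_hasDerivAt_Ioo hc hd t (Ioo_subset_Ico_self ht)).symm

lemma nat_eq_of_mul_mem_Ioo {τ : ℝ} (hτ : 0 < τ) {n k : ℕ}
    (h : (k : ℝ) * τ ∈ Ioo (((n : ℝ) - 1) * τ) (((n : ℝ) + 1) * τ)) : k = n := by
  have hlo : (n : ℝ) < k + 1 := by linarith [lt_of_mul_lt_mul_right h.1 hτ.le]
  have hhi : (k : ℝ) < n + 1 := lt_of_mul_lt_mul_right h.2 hτ.le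
  have : n < k + 1 := by exact_mod_cast hlo
  have : k < n + 1 := by exact_mod_cast hhi
  omega

lemma not_exists_pulse_time {τ τ₂ : ℝ} (hτ₂ : 0 ≤ τ₂) (hττ₂ : τ₂ < τ) {n : ℕ} {t : ℝ}
    (hlo : (n : ℝ) * τ < t) (hhi : t < ((n : ℝ) + 1) * τ) (hne : t ≠ (n : ℝ) * τ + τ₂) :
    ¬ ∃ k : ℕ, t = (k : ℝ) * τ ∨ t = (k : ℝ) * τ + τ₂ := by
  have hτ : 0 < τ := hτ₂.trans_lt hττ₂
  rintro ⟨k, rfl | rfl⟩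
  · rw [nat_eq_of_mul_mem_Ioo (n := n) hτ ⟨by linarith, hhi⟩] at hlo
    exact hlo.false
  · rw [nat_eq_of_mul_mem_Ioo (n := n) (k := k) hτ ⟨by linarith, by linarith⟩] at hne
    exact hne rfl

/-- A phase oscillator `dθ/dt = ω` receiving alternating instantaneous pulses
(shift by `f` at times `nτ`, shift by `f₂` at times `nτ + τ₂`) satisfies
`θ(nτ) = G^[n](θ₀)` for the composite return map `G = h₁ ∘ h₂`. -/
theorem alternating_pulse_return_map
    (ω τ τ₂ : ℝ) (hτ₂ : 0 < τ₂) (hττ₂ : τ₂ < τ)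
    (f f₂ : ℝ → ℝ) (θ₀ : ℝ) (θ : ℝ → ℝ)
    (hinit : θ 0 = θ₀)
    (hflow : ∀ t : ℝ,
      (¬ ∃ n : ℕ, t = (n : ℝ) * τ ∨ t = (n : ℝ) * τ + τ₂) →
      HasDerivAt θ ω t)
    (hright₁ : ∀ n : ℕ, ContinuousWithinAt θ (Set.Ici ((n : ℝ) * τ)) ((n : ℝ) * τ))
    (hright₂ : ∀ n : ℕ,
      ContinuousWithinAt θ (Set.Ici ((n : ℝ) * τ + τ₂)) ((n : ℝ) * τ + τ₂))
    (hkick₁ : ∀ n : ℕ, 1 ≤ n → ∀ L : ℝ,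
      Tendsto θ (𝓝[<] ((n : ℝ) * τ)) (𝓝 L) → θ ((n : ℝ) * τ) = L + f L)
    (hkick₂ : ∀ n : ℕ, ∀ L₂ : ℝ,
      Tendsto θ (𝓝[<] ((n : ℝ) * τ + τ₂)) (𝓝 L₂) →
      θ ((n : ℝ) * τ + τ₂) = L₂ + f₂ L₂)
    (h₁ h₂ : ℝ → ℝ)
    (hh₂ : ∀ s, h₂ s = s + ω * τ₂ + f₂ (s + ω * τ₂))
    (hh₁ : ∀ s, h₁ s = s + ω * (τ - τ₂) + f (s + ω * (τ - τ₂))) :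
    ∀ n : ℕ, θ ((n : ℝ) * τ) = (h₁ ∘ h₂)^[n] θ₀ := by
  intro n
  induction n with
  | zero => simpa using hinit
  | succ n ih =>
    have hfree : ∀ t, (n : ℝ) * τ < t → t < ((n : ℝ) + 1) * τ → t ≠ (n : ℝ) * τ + τ₂ →
        HasDerivAt θ ω t := fun t hlo hhi hne ↦
      hflow t (not_exists_pulse_time hτ₂.le hττ₂ hlo hhi hne)
    have hmid : θ ((n : ℝ) * τ + τ₂) = h₂ (θ ((n : ℝ) * τ)) := by
      have hlim := tendsto_nhdsLT_of_hasDerivAt_Ioo (by linarith) (hright₁ n)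
        fun t ht ↦ hfree t ht.1 (by linarith [ht.2]) ht.2.ne
      rw [add_sub_cancel_left] at hlim
      rw [hh₂, hkick₂ n _ hlim]
    have hend : θ (((n + 1 : ℕ) : ℝ) * τ) = h₁ (θ ((n : ℝ) * τ + τ₂)) := by
      have hlim := tendsto_nhdsLT_of_hasDerivAt_Ioo (b := ((n + 1 : ℕ) : ℝ) * τ)
        (by push_cast; linarith) (hright₂ n)
        fun t ht ↦ hfree t (by linarith [ht.1]) (by exact_mod_cast ht.2) ht.1.ne'
      have hgap : ((n + 1 : ℕ) : ℝ) * τ - ((n : ℝ) * τ + τ₂) = τ - τ₂ := by push_cast; ring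
      rw [hgap] at hlim
      rw [hh₁, hkick₁ (n + 1) n.succ_pos _ hlim]
    rw [Function.iterate_succ_apply', hend, hmid, ih, Function.comp_apply]
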